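/- Let G be a strongly connected directed graph with DFS tree T rooted at s, loop nesting tree H (with respect to T), and dominator tree D rooted at s. Let x ≠ s be a vertex and w a vertex such that the parent h(w) of w in H is not a proper descendant of x in D (h(w) ∉ D[x]∖{x}) while w ∈ D[x]∖{x}. Then the nearest common ancestor of w and x in H equals h(w). -/

import Mathlib

/-- A (directed) walk in digraph `G` from `a` to `b`, given as its list of vertices. -/
def DiWalk {V : Type*} (G : V → V → Prop) (a b : V) (l : List V) : Prop :=
  List.Chain' G l ∧ l.head? = some a ∧ l.getLast? = some b

/-- Ancestor relation of the rooted tree given by the parent function `par`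
with root `s`: `Anc par s a b` iff `a` is a (weak) ancestor of `b`. -/
def Anc {V : Type*} (par : V → V) (s : V) : V → V → Prop :=
  Relation.ReflTransGen (fun a b => b ≠ s ∧ par b = a)

/-- `loop(u)` with respect to the DFS tree `par` of `G`: descendants `x` of `u` in the
tree having a directed walk to `u` in `G` using only descendants of `u`. -/
def Loop {V : Type*} (G : V → V → Prop) (par : V → V) (s u : V) : Set V :=
  {x | Anc par s u x ∧ ∃ l, DiWalk G x u l ∧ ∀ y ∈ l, Anc par s u y}

/-- The ancestor relation of the loop nesting tree `H`: `a` is an `H`-ancestor of `b`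
iff `a` is a `T`-ancestor of `b` and `b ∈ loop(a)`. -/
def AncH {V : Type*} (G : V → V → Prop) (par : V → V) (s a b : V) : Prop :=
  Anc par s a b ∧ b ∈ Loop G par s a

/-- `a` dominates `b` with respect to source `s`: every `s → b` walk contains `a`. -/
def Dom {V : Type*} (G : V → V → Prop) (s a b : V) : Prop :=
  ∀ l, DiWalk G s b l → a ∈ l

/-!
If `x` does not dominate `h(w)`, some `s → h(w)` walk avoids `x`; extending it by the tree path
from `h(w)` to `w` gives an `s → w` walk, so `x` dominating `w` forces `x` onto that tree path.
Since loops are closed under taking tree ancestors that stay below the loop head, `x ∈ loop(h(w))`,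
so `h(w)` is a common `H`-ancestor of `w` and `x`. Any other common `H`-ancestor `y` is a proper
`T`-ancestor of `w` with `w ∈ loop(y)`, hence a `T`-ancestor of the nearest such vertex `h(w)`,
and the same closure property puts `h(w)` in `loop(y)`.
-/

theorem DiWalk.append {V : Type*} {G : V → V → Prop} {a b c : V} {l m : List V}
    (h₁ : DiWalk G a b l) (h₂ : DiWalk G b c m) : DiWalk G a c (l ++ m.tail) := by
  obtain ⟨hc₁, hh₁, hl₁⟩ := h₁
  obtain ⟨hc₂, hh₂, hl₂⟩ := h₂
  obtain ⟨m, rfl⟩ : ∃ m', m = b :: m' := by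
    cases m with
    | nil => simp at hh₂
    | cons z t => exact ⟨t, by simpa using hh₂⟩
  have hl : l ≠ [] := by rintro rfl; simp at hh₁
  replace hc₂ := List.isChain_cons.mp hc₂
  refine ⟨hc₁.append hc₂.2 ?_, by rwa [List.head?_append_of_ne_nil _ hl], ?_⟩
  · intro z hz y hy
    rw [hl₁, Option.mem_some_iff] at hz
    exact hz ▸ hc₂.1 y hy
  · cases m with
    | nil => simpa [← Option.some_inj.mp hl₂] using hl₁
    | cons z t => simpa [List.getLast?_append_of_ne_nil] using hl₂

section

variable {V : Type*} {G : V → V → Prop} {par : V → V} {s : V}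

theorem Anc.exists_diWalk (htree_edge : ∀ a, a ≠ s → G (par a) a) {a b : V}
    (h : Anc par s a b) :
    ∃ l, DiWalk G a b l ∧ ∀ y ∈ l, Anc par s a y ∧ Anc par s y b := by
  induction h with
  | refl =>
    refine ⟨[a], ⟨List.isChain_singleton a, rfl, rfl⟩, ?_⟩
    simp only [List.mem_singleton, forall_eq]
    exact ⟨.refl, .refl⟩
  | @tail c d hac hcd ih =>
    obtain ⟨l, hl, hmem⟩ := ih
    refine ⟨l ++ [d], hl.append ⟨List.isChain_pair.mpr ?_, rfl, rfl⟩, ?_⟩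
    · exact hcd.2 ▸ htree_edge d hcd.1
    · intro y hy
      rcases List.mem_append.mp hy with hy | hy
      · exact ⟨(hmem y hy).1, (hmem y hy).2.tail hcd⟩
      · rw [List.mem_singleton.mp hy]
        exact ⟨hac.tail hcd, .refl⟩

theorem mem_loop_of_anc_of_mem_loop (htree_edge : ∀ a, a ≠ s → G (par a) a) {u v w : V}
    (huv : Anc par s u v) (hvw : Anc par s v w) (hw : w ∈ Loop G par s u) :
    v ∈ Loop G par s u := by
  obtain ⟨p, hp, hpm⟩ := hvw.exists_diWalk htree_edge
  obtain ⟨-, l, hl, hlm⟩ := hw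
  refine ⟨huv, p ++ l.tail, hp.append hl, fun y hy => ?_⟩
  rcases List.mem_append.mp hy with hy | hy
  · exact Relation.ReflTransGen.trans huv (hpm y hy).1
  · exact hlm y (List.mem_of_mem_tail hy)

theorem Dom.anc_of_not_dom_of_anc (htree_edge : ∀ a, a ≠ s → G (par a) a) {x a w : V}
    (hxw : Dom G s x w) (hxa : ¬ Dom G s x a) (haw : Anc par s a w) :
    Anc par s a x ∧ Anc par s x w := by
  obtain ⟨q, hq, hxq⟩ : ∃ q, DiWalk G s a q ∧ x ∉ q := by simpa [Dom] using hxa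
  obtain ⟨p, hp, hpm⟩ := haw.exists_diWalk htree_edge
  apply hpm x
  rcases List.mem_append.mp (hxw _ (hq.append hp)) with h | h
  · exact absurd h hxq
  · exact List.mem_of_mem_tail h

end

theorem stmt_19_general {V : Type*} (G : V → V → Prop) (par : V → V) (s x w hw : V)
    (htree_edge : ∀ a, a ≠ s → G (par a) a)
    (hanti : ∀ a b, Anc par s a b → Anc par s b a → a = b)
    (hhw2 : Anc par s hw w) (hhw3 : w ∈ Loop G par s hw)
    (hhw4 : ∀ y, y ≠ w → Anc par s y w → w ∈ Loop G par s y → Anc par s y hw)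
    (hwD : Dom G s x w) (hwx : w ≠ x)
    (hhwD : ¬ (Dom G s x hw ∧ hw ≠ x)) :
    AncH G par s hw w ∧ AncH G par s hw x ∧
      ∀ y, AncH G par s y w → AncH G par s y x → AncH G par s y hw := by
  obtain ⟨hhwx, hxw⟩ : Anc par s hw x ∧ Anc par s x w := by
    by_cases hcase : hw = x
    · exact ⟨hcase ▸ .refl, hcase ▸ hhw2⟩
    · exact hwD.anc_of_not_dom_of_anc htree_edge (fun h => hhwD ⟨h, hcase⟩) hhw2
  refine ⟨⟨hhw2, hhw3⟩, ⟨hhwx, mem_loop_of_anc_of_mem_loop htree_edge hhwx hxw hhw3⟩, ?_⟩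
  rintro y ⟨hyw, hywL⟩ ⟨hyx, -⟩
  have hyw_ne : y ≠ w := by
    rintro rfl
    exact hwx (hanti _ _ hxw hyx).symm
  have hyhw : Anc par s y hw := hhw4 y hyw_ne hyw hywL
  exact ⟨hyhw, mem_loop_of_anc_of_mem_loop htree_edge hyhw hhw2 hywL⟩

/-- in a strongly connected `G` with DFS tree `par` rooted at `s`,
loop nesting tree `H` and dominator tree `D` rooted at `s`, if `x ≠ s`, `w` is a
proper descendant of `x` in `D` (`w ∈ D[x]∖{x}`), and the parent `hw = h(w)` of `w`
in `H` is not a proper descendant of `x` in `D`, then the nearest common ancestor of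
`w` and `x` in `H` equals `h(w)`. -/
theorem stmt_19 {V : Type*} (G : V → V → Prop) (par : V → V) (s x w hw : V)
    (hsc : ∀ a b : V, Relation.ReflTransGen G a b)
    (hroot : par s = s)
    (htree_edge : ∀ a, a ≠ s → G (par a) a)
    (hanti : ∀ a b, Anc par s a b → Anc par s b a → a = b)
    (hxs : x ≠ s)
    (hhw1 : hw ≠ w) (hhw2 : Anc par s hw w) (hhw3 : w ∈ Loop G par s hw)
    (hhw4 : ∀ y, y ≠ w → Anc par s y w → w ∈ Loop G par s y → Anc par s y hw)
    (hwD : Dom G s x w) (hwx : w ≠ x)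
    (hhwD : ¬ (Dom G s x hw ∧ hw ≠ x)) :
    AncH G par s hw w ∧ AncH G par s hw x ∧
      ∀ y, AncH G par s y w → AncH G par s y x → AncH G par s y hw :=
  stmt_19_general G par s x w hw htree_edge hanti hhw2 hhw3 hhw4 hwD hwx hhwD
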